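/- arXiv:0811.2113 — 3 statements merged into one kernel-verified Lean document; each statement's English description precedes it below -/
import Mathlib

section
/- In the category Rel, whose objects are sets and whose morphisms X → Y are relations R ⊆ X × Y with relational composition, an object is finitely presentable (i.e. its covariant hom-functor to Set preserves directed colimits) if and only if it is the empty set. -/
/-!
The graph functor `Type ⥤ Rel` is left adjoint to the powerset functor, so it preserves colimits;
hence in `Rel` every set `S` is still the directed colimit of its finite subsets. If `X` is
nonempty, the full relation `X → S` factors through the inclusion of a finite subset `A` only
when `A = S`, so finite presentability of `X` would force every set to be finite. Conversely an
empty `X` is initial, so its hom-functor is constantly a point, and such a functor preserves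
colimits over any connected (in particular any nonempty directed) index category.
-/

open CategoryTheory Limits

universe v u

/-- An object `X` of a category `C` is finitely presentable when the hom-functor
`C(X, −) : C ⥤ Type` preserves colimits of diagrams indexed by (nonempty) directed
preorders. -/
def FinitelyPresentable {C : Type u} [Category.{v} C] (X : C) : Prop :=
  ∀ (J : Type v) (_ : Preorder J) (_ : IsDirected J (· ≤ ·)) (_ : Nonempty J)
    (D : J ⥤ C), PreservesColimit D (coyoneda.obj (Opposite.op X))

open Cardinal

def SetRel.equivFunSet (α β : Type*) : SetRel α β ≃ (α → Set β) where
  toFun R a := {b | (a, b) ∈ R}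
  invFun f := {p | p.2 ∈ f p.1}
  left_inv _ := rfl
  right_inv _ := rfl

lemma CategoryTheory.Limits.IsInitial.preservesColimit_coyoneda {C : Type u} [Category.{v} C]
    {X : C} (hX : IsInitial X) {J : Type*} [Category J] [IsConnected J] (D : J ⥤ C) :
    PreservesColimit D (coyoneda.obj (.op X)) := by
  obtain ⟨j₀⟩ := IsConnected.is_nonempty (J := J)
  refine ⟨fun {c} _ => ⟨?_⟩⟩
  exact
    { desc s := TypeCat.ofHom fun _ => s.ι.app j₀ (hX.to _)
      fac s j := by
        ext f
        obtain rfl := hX.hom_ext f (hX.to _)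
        refine constant_of_preserves_morphisms (fun j => s.ι.app j (hX.to (D.obj j))) ?_ j₀ j
        intro j k g
        rw [← types_congr_hom (s.w g) (hX.to _)]
        exact congrArg (s.ι.app k) (hX.hom_ext _ _)
      uniq s m hm := by
        ext f
        obtain rfl := hX.hom_ext f (hX.to (D.obj j₀) ≫ c.ι.app j₀)
        exact types_congr_hom (hm j₀) (hX.to _) }

lemma HasCardinalLT.Set.isDirected_le (X : Type u) {κ : Cardinal.{u}} (hκ : ℵ₀ ≤ κ) :
    IsDirected (HasCardinalLT.Set X κ) (· ≤ ·) :=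
  ⟨fun A B => ⟨⟨A.1 ∪ B.1, hasCardinalLT_union hκ A.2 B.2⟩,
    Set.subset_union_left, Set.subset_union_right⟩⟩

lemma HasCardinalLT.Set.nonempty (X : Type u) {κ : Cardinal.{u}} (hκ : ℵ₀ ≤ κ) :
    Nonempty (HasCardinalLT.Set X κ) :=
  ⟨⟨∅, hasCardinalLT_of_finite _ _ hκ⟩⟩

namespace CategoryTheory.RelCat

def powersetFunctor : RelCat.{u} ⥤ Type u where
  obj Y := Set Y
  map r := TypeCat.ofHom (SetRel.image r.rel)
  map_id Y := by ext s : 3; exact SetRel.image_id s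
  map_comp r s := by ext t : 3; exact SetRel.image_comp r.rel s.rel t

-- The hom-equivalence goes through `SetRel.equivFunSet` because `y ∈ s` does not elaborate
-- for `y : Y` with `Y : RelCat` (the instance search does not see that `Y` is a type).
def graphPowersetAdjunction : graphFunctor.{u} ⊣ powersetFunctor.{u} :=
  Adjunction.mkOfHomEquiv
    { homEquiv X Y :=
        { toFun r := TypeCat.ofHom (SetRel.equivFunSet X Y r.rel)
          invFun f := .ofRel ((SetRel.equivFunSet X Y).symm f)
          left_inv _ := rfl
          right_inv _ := rfl }
      homEquiv_naturality_left_symm _ _ := by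
        ext ⟨x, y⟩
        exact ⟨fun h => ⟨_, rfl, h⟩, fun ⟨_, rfl, h⟩ => h⟩
      homEquiv_naturality_right _ _ := by ext x : 3; rfl }

instance : graphFunctor.{u}.IsLeftAdjoint := graphPowersetAdjunction.isLeftAdjoint

def isInitialOfIsEmpty (X : RelCat.{u}) [IsEmpty X] : IsInitial X :=
  IsInitial.ofUniqueHom (fun _ => .ofRel ∅) fun _ _ =>
    Hom.ext _ _ (Set.eq_empty_of_forall_notMem fun p => isEmptyElim p.1)

lemma hasCardinalLT_of_preservesColimit (X : RelCat.{u}) [Nonempty X] (S : Type u)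
    {κ : Cardinal.{u}} (hκ : ℵ₀ ≤ κ)
    [PreservesColimit (HasCardinalLT.Set.functor S κ ⋙ graphFunctor) (coyoneda.obj (.op X))] :
    HasCardinalLT S κ := by
  have hc := isColimitOfPreserves (coyoneda.obj (.op X))
    (isColimitOfPreserves graphFunctor (HasCardinalLT.Set.isColimitCocone S κ hκ))
  obtain ⟨A, r, hr⟩ := Types.jointly_surjective_of_isColimit hc (.ofRel Set.univ : X ⟶ S)
  obtain ⟨x⟩ := ‹Nonempty X›
  have hA : A.1 = Set.univ := Set.eq_univ_of_forall fun y => by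
    obtain ⟨a, -, rfl⟩ := (congrArg (fun f => (x, y) ∈ f.rel) hr).mpr trivial
    exact a.2
  exact (hasCardinalLT_iff_of_equiv (Equiv.Set.univ S) κ).1 (hA ▸ A.2)

end CategoryTheory.RelCat

/-- An object of the category `Rel` of sets and relations is finitely presentable if and
only if it is the empty set. -/
theorem relCat_finitelyPresentable_iff_isEmpty (X : RelCat.{u}) :
    FinitelyPresentable X ↔ IsEmpty X := by
  constructor
  · intro hX
    by_contra hne
    have : Nonempty X := not_isEmpty_iff.1 hne
    have := hX _ _ (HasCardinalLT.Set.isDirected_le (ULift ℕ) le_rfl)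
      (HasCardinalLT.Set.nonempty _ le_rfl) (HasCardinalLT.Set.functor _ _ ⋙ RelCat.graphFunctor)
    exact ((hasCardinalLT_aleph0_iff _).1
      (RelCat.hasCardinalLT_of_preservesColimit X (ULift ℕ) le_rfl)).false
  · intro _ J _ _ _ D
    have := IsFiltered.isConnected J
    exact (RelCat.isInitialOfIsEmpty X).preservesColimit_coyoneda D
end

section
/- The category Rel of sets and relations does not have all equalizers: there is a parallel pair of relations (namely R = {0,1} × {0} and S = {(0,0)} from X = {0,1} to Y = {0}) that has no equalizer in Rel. -/
/-!
Relations from a one-point set into `E` are the subsets of `E`, a Boolean algebra. Composing with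
an equalizer `ι : E → X` of `R` and `S` would turn them bijectively and union-preservingly into the
subsets `T ⊆ {0,1}` with `T ≠ ∅ → 0 ∈ T`, that is into the chain `∅ ⊂ {0} ⊂ {0,1}`, where `{0}`
has no complement.
-/

open CategoryTheory Limits

universe u

/-- The two-element set `{0, 1}` (encoded as `Bool`, with `0 ↦ false`, `1 ↦ true`) as an
object of `Rel`. -/
def relX : RelCat.{u} := ULift.{u} Bool

/-- The one-element set `{0}` as an object of `Rel`. -/
def relY : RelCat.{u} := PUnit.{u + 1}

/-- The relation `R = {0,1} × {0} ⊆ X × Y`. -/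
def relR : relX.{u} ⟶ relY.{u} := .ofRel {_p | True}

/-- The relation `S = {(0,0)} ⊆ X × Y`. -/
def relS : relX.{u} ⟶ relY.{u} :=
  .ofRel {p : ULift.{u} Bool × PUnit.{u + 1} | p.1.down = false}

theorem SetRel.union_comp {α β γ : Type*} (R₁ R₂ : SetRel α β) (S : SetRel β γ) :
    (R₁ ∪ R₂).comp S = R₁.comp S ∪ R₂.comp S := by
  aesop

namespace CategoryTheory.RelCat

variable {W E X Y : RelCat.{u}}

theorem rel_comp_subset_rel_comp_iff_of_mono (ι : E ⟶ X) [Mono ι] {v w : W ⟶ E} :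
    (v ≫ ι).rel ⊆ (w ≫ ι).rel ↔ v.rel ⊆ w.rel := by
  refine ⟨fun h => ?_, SetRel.comp_subset_comp_left⟩
  have hsup : (Hom.ofRel (v.rel ∪ w.rel) : W ⟶ E) = w := by
    rw [← cancel_mono ι]
    ext1
    exact (SetRel.union_comp _ _ _).trans (Set.union_eq_right.2 h)
  exact Set.union_eq_right.1 (congrArg Hom.rel hsup)

theorem exists_compl_of_mono (ι : E ⟶ X) [Mono ι] (v : W ⟶ E) :
    ∃ v' : W ⟶ E, ∀ w : W ⟶ E, (w ≫ ι).rel ⊆ (v ≫ ι).rel ∪ (v' ≫ ι).rel ∧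
      ((w ≫ ι).rel ⊆ (v ≫ ι).rel → (w ≫ ι).rel ⊆ (v' ≫ ι).rel → (w ≫ ι).rel = ∅) := by
  refine ⟨.ofRel v.relᶜ, fun w => ⟨?_, fun hv hv' => ?_⟩⟩
  · calc (w ≫ ι).rel ⊆ (v.rel ∪ v.relᶜ).comp ι.rel :=
          SetRel.comp_subset_comp_left fun p _ => em (p ∈ v.rel)
      _ = _ := SetRel.union_comp _ _ _
  · rw [rel_comp_subset_rel_comp_iff_of_mono] at hv hv'
    rw [Hom.rel_comp, Set.subset_empty_iff.1 fun p hp => hv' hp (hv hp)]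
    exact SetRel.empty_comp _

theorem exists_compl_of_hasEqualizer (f g : X ⟶ Y) [HasEqualizer f g] {r : W ⟶ X}
    (hr : r ≫ f = r ≫ g) :
    ∃ r' : W ⟶ X, r' ≫ f = r' ≫ g ∧ ∀ q : W ⟶ X, q ≫ f = q ≫ g →
      q.rel ⊆ r.rel ∪ r'.rel ∧ (q.rel ⊆ r.rel → q.rel ⊆ r'.rel → q.rel = ∅) := by
  obtain ⟨v, hv⟩ := exists_compl_of_mono (equalizer.ι f g) (equalizer.lift r hr)
  refine ⟨v ≫ equalizer.ι f g, by rw [Category.assoc, Category.assoc, equalizer.condition], ?_⟩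
  intro q hq
  simpa only [equalizer.lift_ι] using hv (equalizer.lift q hq)

end CategoryTheory.RelCat

theorem comp_relR_eq_comp_relS_iff {W : RelCat.{u}} (h : W ⟶ relX.{u}) :
    h ≫ relR = h ≫ relS ↔ ∀ w x, (w, x) ∈ h.rel → (w, (⟨false⟩ : relX.{u})) ∈ h.rel := by
  constructor
  · intro hRS w x hx
    have hw : (w, PUnit.unit) ∈ (h ≫ relS).rel := hRS ▸ ⟨x, hx, trivial⟩
    obtain ⟨⟨y⟩, hy, rfl : y = false⟩ := hw
    exact hy
  · intro hfalse
    ext ⟨w, ⟨⟩⟩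
    exact ⟨fun ⟨x, hx, _⟩ => ⟨_, hfalse w x hx, rfl⟩, fun ⟨x, hx, _⟩ => ⟨x, hx, trivial⟩⟩

/-- The category `Rel` of sets and relations does not have all equalizers: the parallel pair
`R = {0,1} × {0}`, `S = {(0,0)} : {0,1} → {0}` has no equalizer in `Rel`. -/
theorem relCat_not_hasEqualizer : ¬ HasEqualizer relR.{u} relS.{u} := by
  intro _
  let P : RelCat.{u} := PUnit.{u + 1}
  let r₀ : P ⟶ relX.{u} := .ofRel {p | p.2 = ⟨false⟩}
  let r₁ : P ⟶ relX.{u} := .ofRel Set.univ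
  have hr₀ : r₀ ≫ relR = r₀ ≫ relS := (comp_relR_eq_comp_relS_iff r₀).2 fun _ _ _ => rfl
  have hr₁ : r₁ ≫ relR = r₁ ≫ relS := (comp_relR_eq_comp_relS_iff r₁).2 fun _ _ _ => trivial
  obtain ⟨r, hr, hcompl⟩ := RelCat.exists_compl_of_hasEqualizer relR relS hr₀
  have htrue : (PUnit.unit, (⟨true⟩ : relX.{u})) ∈ r.rel :=
    ((hcompl r₁ hr₁).1 trivial).resolve_left (by rintro ⟨⟩)
  have hfalse := (comp_relR_eq_comp_relS_iff r).1 hr _ _ htrue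
  have hr₀_empty : r₀.rel = ∅ :=
    (hcompl r₀ hr₀).2 subset_rfl (by rintro ⟨⟨⟩, x⟩ (rfl : x = _); exact hfalse)
  exact Set.nonempty_iff_ne_empty.1 (show r₀.rel.Nonempty from ⟨(PUnit.unit, ⟨false⟩), rfl⟩)
    hr₀_empty
end

section
/- For every complex Hilbert space H and every sequence of continuous (bounded) linear maps κₙ : ℂ → H (n ∈ ℕ), there exists a sequence of continuous linear maps fₙ : ℂ → ℂ such that no continuous linear map f : H → ℂ satisfies f ∘ κₙ = fₙ for all n. In particular, the ℕ-indexed family of copies of ℂ has no coproduct in the category of Hilbert spaces and bounded linear maps. -/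
universe u

/-- A factorization `g` would force `‖f i‖ ≤ ‖g‖ * ‖κ i‖` for every `i`. -/
theorem ContinuousLinearMap.not_exists_comp_eq_of_forall_exists_lt_norm
    {𝕜 E F G : Type*} [NontriviallyNormedField 𝕜] [SeminormedAddCommGroup E]
    [SeminormedAddCommGroup F] [SeminormedAddCommGroup G] [NormedSpace 𝕜 E] [NormedSpace 𝕜 F]
    [NormedSpace 𝕜 G] {ι : Type*} (κ : ι → E →L[𝕜] F) (f : ι → E →L[𝕜] G)
    (hf : ∀ C : ℝ, ∃ i, C * ‖κ i‖ < ‖f i‖) :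
    ¬ ∃ g : F →L[𝕜] G, ∀ i, g.comp (κ i) = f i := by
  rintro ⟨g, hg⟩
  obtain ⟨i, hi⟩ := hf ‖g‖
  exact hi.not_ge (hg i ▸ g.opNorm_comp_le (κ i))

theorem no_bounded_cotuple_general (H : Type u) [NormedAddCommGroup H] [InnerProductSpace ℂ H]
    (κ : ℕ → (ℂ →L[ℂ] H)) :
    ∃ f : ℕ → (ℂ →L[ℂ] ℂ), ¬ ∃ g : H →L[ℂ] ℂ, ∀ n : ℕ, g.comp (κ n) = f n := by
  refine ⟨fun n => ((n + 1) * (‖κ n‖ + 1) : ℝ) • ContinuousLinearMap.id ℂ ℂ,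
    ContinuousLinearMap.not_exists_comp_eq_of_forall_exists_lt_norm κ _ fun C => ?_⟩
  obtain ⟨n, hn⟩ := exists_nat_gt C
  refine ⟨n, ?_⟩
  rw [norm_smul, ContinuousLinearMap.norm_id, mul_one, Real.norm_of_nonneg (by positivity)]
  nlinarith [norm_nonneg (κ n)]

/-- For every complex Hilbert space `H` and every sequence of continuous linear maps
`κₙ : ℂ → H`, there is a sequence of continuous linear maps `fₙ : ℂ → ℂ` such that no
continuous linear map `f : H → ℂ` satisfies `f ∘ κₙ = fₙ` for all `n`.  (In particular the
`ℕ`-indexed family of copies of `ℂ` has no coproduct in the category of Hilbert spaces and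
bounded linear maps.) -/
theorem no_bounded_cotuple (H : Type u) [NormedAddCommGroup H] [InnerProductSpace ℂ H]
    [CompleteSpace H] (κ : ℕ → (ℂ →L[ℂ] H)) :
    ∃ f : ℕ → (ℂ →L[ℂ] ℂ), ¬ ∃ g : H →L[ℂ] ℂ, ∀ n : ℕ, g.comp (κ n) = f n :=
  no_bounded_cotuple_general H κ
end
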